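/- The triple {D₀', D₁', D₂'} is a valid POVM on ℂ²: each of D₀', D₁', D₂' is a positive semidefinite 2×2 complex matrix and D₀' + D₁' + D₂' = I. -/

import Mathlib

noncomputable section

open Matrix
open scoped ComplexOrder

/-- computational basis vector `|0⟩ = (1,0)` -/
def ket0 : Fin 2 → ℂ := ![1, 0]

/-- computational basis vector `|1⟩ = (0,1)` -/
def ket1 : Fin 2 → ℂ := ![0, 1]

/-- rotated basis vector `|0´⟩ = cos θ |0⟩ + sin θ |1⟩` -/
def ket0Rot (θ : ℝ) : Fin 2 → ℂ := ![(Real.cos θ : ℂ), (Real.sin θ : ℂ)]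

/-- rotated basis vector `|1´⟩ = sin θ |0⟩ − cos θ |1⟩` -/
def ket1Rot (θ : ℝ) : Fin 2 → ℂ := ![(Real.sin θ : ℂ), -(Real.cos θ : ℂ)]


/-- outer product `|v⟩⟨v|` as a 2×2 complex matrix -/
def outer (v : Fin 2 → ℂ) : Matrix (Fin 2) (Fin 2) ℂ := Matrix.vecMulVec v (star v)


/-- `D₀' = (1/(1+cos θ)) |0´⟩⟨0´|` -/
def D0' (θ : ℝ) : Matrix (Fin 2) (Fin 2) ℂ := ((1 / (1 + Real.cos θ) : ℝ) : ℂ) • outer (ket0Rot θ)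

/-- `D₁' = (1/(1+cos θ)) |0⟩⟨0|` -/
def D1' (θ : ℝ) : Matrix (Fin 2) (Fin 2) ℂ := ((1 / (1 + Real.cos θ) : ℝ) : ℂ) • outer ket0

/-- `D₂' = I − D₀' − D₁'` -/
def D2' (θ : ℝ) : Matrix (Fin 2) (Fin 2) ℂ := 1 - D0' θ - D1' θ

lemma outer_psd (v : Fin 2 → ℂ) : (outer v).PosSemidef := by
  have : outer v = (Matrix.replicateRow Unit (star v))ᴴ * Matrix.replicateRow Unit (star v) := by
    rw [Matrix.conjTranspose_replicateRow, star_star, ← Matrix.vecMulVec_eq]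
    rfl
  rw [this]
  exact Matrix.posSemidef_conjTranspose_mul_self _

lemma smul_outer_psd (c : ℝ) (hc : 0 ≤ c) (v : Fin 2 → ℂ) :
    ((c : ℂ) • outer v).PosSemidef := by
  have h : (c : ℂ) • outer v = outer ((Real.sqrt c : ℂ) • v) := by
    ext i j
    simp [outer, Matrix.vecMulVec_apply, Pi.smul_apply, smul_eq_mul]
    rw [show ((Real.sqrt c : ℂ) * v i * ((Real.sqrt c : ℂ) * (starRingEnd ℂ) (v j))) = ((Real.sqrt c : ℂ) * (Real.sqrt c : ℂ)) * (v i * (starRingEnd ℂ) (v j)) by ring, ← Complex.ofReal_mul, Real.mul_self_sqrt hc]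
  rw [h]; exact outer_psd _

lemma D2'_eq (θ : ℝ) (h : 1 + Real.cos θ ≠ 0) :
    D2' θ = ((2 * Real.cos θ / (1 + Real.cos θ) : ℝ) : ℂ) • outer (ket1Rot (θ / 2)) := by
  have hcc : Real.cos θ = Real.cos (θ/2) ^ 2 - Real.sin (θ/2) ^ 2 := by
    rw [← Real.cos_two_mul']; ring_nf
  have hss : Real.sin θ = 2 * Real.sin (θ/2) * Real.cos (θ/2) := by
    rw [← Real.sin_two_mul]; ring_nf
  have hpy : Real.sin (θ/2) ^ 2 + Real.cos (θ/2) ^ 2 = 1 := Real.sin_sq_add_cos_sq _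
  rw [hcc] at h
  ext i j
  fin_cases i <;> fin_cases j <;>
  · simp only [D2', D0', D1', outer, ket0, ket0Rot, ket1Rot, Matrix.vecMulVec_apply,
      Matrix.sub_apply, Matrix.smul_apply, Matrix.one_apply, smul_eq_mul,
      Pi.star_apply, Matrix.cons_val_zero, Matrix.cons_val_one, Matrix.head_cons,
      RCLike.star_def, Complex.conj_ofReal, star_neg, Fin.mk_one, Fin.zero_eta,
      if_true, if_false, Fin.isValue, ne_eq, one_ne_zero, zero_ne_one,
      not_false_eq_true, reduceIte, star_one, mul_one, one_mul]
    simp only [hcc, hss]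
    have hpy' := hpy
    have h' := h
    revert hpy' h'
    generalize Real.sin (θ/2) = sh
    generalize Real.cos (θ/2) = ch
    intro hpy' h'
    try simp only [map_zero, mul_zero, zero_mul, sub_zero, zero_sub]
    norm_cast
    field_simp
    first
      | (left; ring1)
      | ring1
      | linear_combination (-(ch ^ 2 - sh ^ 2)) * hpy'
      | linear_combination (-2 * ch ^ 2) * hpy'
      | linear_combination (-2 * ch ^ 2 - 1) * hpy'
      | done

/-- {D₀', D₁', D₂'} is a valid POVM on ℂ²: each element is positive semidefinite
and they sum to the identity. -/
theorem povm_D'_valid (θ : ℝ) (hθ : θ ∈ Set.Ioo 0 (Real.pi / 2)) :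
    (D0' θ).PosSemidef ∧ (D1' θ).PosSemidef ∧ (D2' θ).PosSemidef ∧
      D0' θ + D1' θ + D2' θ = 1 := by
  obtain ⟨h0, h2⟩ := hθ
  have hcos : 0 < Real.cos θ := Real.cos_pos_of_mem_Ioo ⟨by linarith [Real.pi_pos], h2⟩
  have hden : (0:ℝ) < 1 + Real.cos θ := by linarith
  refine ⟨smul_outer_psd _ (by positivity) _, smul_outer_psd _ (by positivity) _, ?_, ?_⟩
  · rw [D2'_eq θ hden.ne']
    exact smul_outer_psd _ (by positivity) _
  · simp [D2']
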